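/- For T : X₁ → Y₁ a linear operator between finite-dimensional normed spaces, y ∈ Y₂, and x* ∈ X₂*, the rank-one tensorized operator satisfies ‖T ⊗ (y x*)‖_{X₁⊗_ε X₂ → Y₁⊗_π Y₂} = ‖T‖_{X₁→Y₁} · ‖x*‖_{X₂*} · ‖y‖_{Y₂}. -/

import Mathlib

open scoped TensorProduct BigOperators
open Filter MeasureTheory

noncomputable section

variable {X Y : Type*} [NormedAddCommGroup X] [NormedSpace ℝ X]
  [NormedAddCommGroup Y] [NormedSpace ℝ Y]

/-- The functional `λ₁ ⊗ ⋯ ⊗ λ_k` on the `k`-fold tensor power. -/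
def dualTensor (k : ℕ) (f : Fin k → (X →L[ℝ] ℝ)) :
    (⨂[ℝ] _ : Fin k, X) →ₗ[ℝ] ℝ :=
  PiTensorProduct.lift ((MultilinearMap.mkPiAlgebra ℝ (Fin k) ℝ).compLinearMap
    (fun i => (f i).toLinearMap))

/-- Injective tensor norm on the `k`-fold tensor power. -/
def injNorm (k : ℕ) (z : ⨂[ℝ] _ : Fin k, X) : ℝ :=
  sSup { r | ∃ f : Fin k → (X →L[ℝ] ℝ), (∀ i, ‖f i‖ ≤ 1) ∧ r = |dualTensor k f z| }

/-- Projective tensor norm on the `k`-fold tensor power. -/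
def projNorm (k : ℕ) (z : ⨂[ℝ] _ : Fin k, Y) : ℝ :=
  sInf { r | ∃ (n : ℕ) (x : Fin n → Fin k → Y),
    z = ∑ j, PiTensorProduct.tprod ℝ (x j) ∧ r = ∑ j, ∏ i, ‖x j i‖ }

/-- The `k`-th tensor power of an operator. -/
def tensorPow (k : ℕ) (T : X →L[ℝ] Y) :
    (⨂[ℝ] _ : Fin k, X) →ₗ[ℝ] (⨂[ℝ] _ : Fin k, Y) :=
  PiTensorProduct.map (fun _ => T.toLinearMap)

/-- `τ_k(T) = ‖T^{⊗k}‖_{ε_k(X)→π_k(Y)}^{1/k}`. -/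
def tau (k : ℕ) (T : X →L[ℝ] Y) : ℝ :=
  (sSup { r | ∃ z : ⨂[ℝ] _ : Fin k, X, injNorm k z ≤ 1 ∧
      r = projNorm k (tensorPow k T z) }) ^ ((k : ℝ)⁻¹)

/-- `τ_∞(T) = lim_k τ_k(T) = sup_{k ≥ 1} τ_k(T)`. -/
def tauInf (T : X →L[ℝ] Y) : ℝ :=
  sSup { r | ∃ k : ℕ, 1 ≤ k ∧ r = tau k T }

/-- `ρ_k(X)`. -/
def rho (k : ℕ) (X : Type*) [NormedAddCommGroup X] [NormedSpace ℝ X] : ℝ :=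
  tau k (ContinuousLinearMap.id ℝ X)

/-- `ρ_∞(X)`. -/
def rhoInf (X : Type*) [NormedAddCommGroup X] [NormedSpace ℝ X] : ℝ :=
  tauInf (ContinuousLinearMap.id ℝ X)

/-- Nuclear norm. -/
def nuclearNorm (T : X →L[ℝ] Y) : ℝ :=
  sInf { r | ∃ (n : ℕ) (g : Fin n → (X →L[ℝ] ℝ)) (y : Fin n → Y),
    (∀ v, T v = ∑ j, g j v • y j) ∧ r = ∑ j, ‖g j‖ * ‖y j‖ }

/-- Banach–Mazur distance. -/
def BMdist (X Y : Type*) [NormedAddCommGroup X] [NormedSpace ℝ X]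
    [NormedAddCommGroup Y] [NormedSpace ℝ Y] : ℝ :=
  sInf { r | ∃ e : X ≃L[ℝ] Y, r = ‖(e : X →L[ℝ] Y)‖ * ‖(e.symm : Y →L[ℝ] X)‖ }

/-- Nuclear tensorization property. -/
def NTP (X Y : Type*) [NormedAddCommGroup X] [NormedSpace ℝ X]
    [NormedAddCommGroup Y] [NormedSpace ℝ Y] : Prop :=
  ∀ T : X →L[ℝ] Y, tauInf T = nuclearNorm T


/-- Injective tensor norm on a binary tensor product. -/
def injNorm2 {X₁ X₂ : Type*} [NormedAddCommGroup X₁] [NormedSpace ℝ X₁]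
    [NormedAddCommGroup X₂] [NormedSpace ℝ X₂] (z : X₁ ⊗[ℝ] X₂) : ℝ :=
  sSup { r | ∃ (f : X₁ →L[ℝ] ℝ) (g : X₂ →L[ℝ] ℝ), ‖f‖ ≤ 1 ∧ ‖g‖ ≤ 1 ∧
    r = |TensorProduct.lift ((LinearMap.mul ℝ ℝ).compl₁₂ f.toLinearMap g.toLinearMap) z| }

/-- Projective tensor norm on a binary tensor product. -/
def projNorm2 {Y₁ Y₂ : Type*} [NormedAddCommGroup Y₁] [NormedSpace ℝ Y₁]
    [NormedAddCommGroup Y₂] [NormedSpace ℝ Y₂] (z : Y₁ ⊗[ℝ] Y₂) : ℝ :=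
  sInf { r | ∃ (n : ℕ) (a : Fin n → Y₁) (b : Fin n → Y₂),
    z = ∑ j, a j ⊗ₜ[ℝ] b j ∧ r = ∑ j, ‖a j‖ * ‖b j‖ }

section Aux

variable {A B : Type*} [NormedAddCommGroup A] [NormedSpace ℝ A]
  [NormedAddCommGroup B] [NormedSpace ℝ B]

/-- Every element of the algebraic tensor product is a finite sum of elementary tensors. -/
lemma tensor_repr2 (z : A ⊗[ℝ] B) :
    ∃ (n : ℕ) (a : Fin n → A) (b : Fin n → B), z = ∑ j, a j ⊗ₜ[ℝ] b j := by
  induction z using TensorProduct.induction_on with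
  | zero => exact ⟨0, ![], ![], by simp⟩
  | tmul x y => exact ⟨1, ![x], ![y], by simp⟩
  | add u v hu hv =>
    obtain ⟨n, a, b, rfl⟩ := hu
    obtain ⟨m, c, d, rfl⟩ := hv
    refine ⟨n + m, Fin.append a c, Fin.append b d, ?_⟩
    rw [Fin.sum_univ_add]
    simp

/-- The pairing `f ⊗ g` on the tensor product. -/
def pairing2 (f : A →L[ℝ] ℝ) (g : B →L[ℝ] ℝ) : A ⊗[ℝ] B →ₗ[ℝ] ℝ :=
  TensorProduct.lift ((LinearMap.mul ℝ ℝ).compl₁₂ f.toLinearMap g.toLinearMap)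

@[simp] lemma pairing2_tmul (f : A →L[ℝ] ℝ) (g : B →L[ℝ] ℝ) (a : A) (b : B) :
    pairing2 f g (a ⊗ₜ[ℝ] b) = f a * g b := rfl

lemma injNorm2_eq (z : A ⊗[ℝ] B) :
    injNorm2 z = sSup { r | ∃ (f : A →L[ℝ] ℝ) (g : B →L[ℝ] ℝ), ‖f‖ ≤ 1 ∧ ‖g‖ ≤ 1 ∧
      r = |pairing2 f g z| } := rfl

lemma injNorm2_bddAbove (z : A ⊗[ℝ] B) :
    BddAbove { r | ∃ (f : A →L[ℝ] ℝ) (g : B →L[ℝ] ℝ), ‖f‖ ≤ 1 ∧ ‖g‖ ≤ 1 ∧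
      r = |pairing2 f g z| } := by
  obtain ⟨n, a, b, rfl⟩ := tensor_repr2 z
  refine ⟨∑ j, ‖a j‖ * ‖b j‖, ?_⟩
  rintro r ⟨f, g, hf, hg, rfl⟩
  rw [map_sum]
  refine (Finset.abs_sum_le_sum_abs _ _).trans (Finset.sum_le_sum fun j _ => ?_)
  rw [pairing2_tmul, abs_mul]
  calc |f (a j)| * |g (b j)| ≤ (‖f‖ * ‖a j‖) * (‖g‖ * ‖b j‖) := by
        gcongr
        · exact f.le_opNorm _
        · exact g.le_opNorm _
    _ ≤ (1 * ‖a j‖) * (1 * ‖b j‖) := by gcongr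
    _ = ‖a j‖ * ‖b j‖ := by ring

lemma pairing2_smul_smul (c d : ℝ) (f : A →L[ℝ] ℝ) (g : B →L[ℝ] ℝ) (z : A ⊗[ℝ] B) :
    pairing2 (c • f) (d • g) z = (c * d) * pairing2 f g z := by
  induction z using TensorProduct.induction_on with
  | zero => simp
  | tmul a b => simp only [pairing2_tmul, ContinuousLinearMap.smul_apply, smul_eq_mul]; ring
  | add u v hu hv => simp only [map_add, hu, hv]; ring

lemma pairing2_zero_left (g : B →L[ℝ] ℝ) (z : A ⊗[ℝ] B) :
    pairing2 (0 : A →L[ℝ] ℝ) g z = 0 := by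
  have := pairing2_smul_smul 0 1 0 g z
  simpa using this

lemma pairing2_zero_right (f : A →L[ℝ] ℝ) (z : A ⊗[ℝ] B) :
    pairing2 f (0 : B →L[ℝ] ℝ) z = 0 := by
  have := pairing2_smul_smul 1 0 f 0 z
  simpa using this

lemma injNorm2_nonneg (z : A ⊗[ℝ] B) : 0 ≤ injNorm2 z := by
  rw [injNorm2_eq]
  exact le_csSup (injNorm2_bddAbove z)
    ⟨0, 0, by simp, by simp, by simp [pairing2_zero_left]⟩

lemma abs_pairing2_le (f : A →L[ℝ] ℝ) (g : B →L[ℝ] ℝ) (z : A ⊗[ℝ] B) :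
    |pairing2 f g z| ≤ ‖f‖ * ‖g‖ * injNorm2 z := by
  rcases eq_or_ne f 0 with rfl | hf
  · rw [pairing2_zero_left]
    simpa using mul_nonneg (mul_nonneg (norm_nonneg _) (norm_nonneg _)) (injNorm2_nonneg z)
  rcases eq_or_ne g 0 with rfl | hg
  · rw [pairing2_zero_right]
    simpa using mul_nonneg (mul_nonneg (norm_nonneg _) (norm_nonneg _)) (injNorm2_nonneg z)
  have hf' : 0 < ‖f‖ := norm_pos_iff.mpr hf
  have hg' : 0 < ‖g‖ := norm_pos_iff.mpr hg
  have key : |pairing2 (‖f‖⁻¹ • f) (‖g‖⁻¹ • g) z| ≤ injNorm2 z := by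
    rw [injNorm2_eq]
    refine le_csSup (injNorm2_bddAbove z) ⟨‖f‖⁻¹ • f, ‖g‖⁻¹ • g, ?_, ?_, rfl⟩
    · refine (ContinuousLinearMap.opNorm_smul_le _ _).trans ?_
      rw [Real.norm_eq_abs, abs_of_pos (inv_pos.2 hf'), inv_mul_cancel₀ hf'.ne']
    · refine (ContinuousLinearMap.opNorm_smul_le _ _).trans ?_
      rw [Real.norm_eq_abs, abs_of_pos (inv_pos.2 hg'), inv_mul_cancel₀ hg'.ne']
  rw [pairing2_smul_smul, abs_mul, abs_mul, abs_of_pos (inv_pos.mpr hf'),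
    abs_of_pos (inv_pos.mpr hg')] at key
  have := mul_le_mul_of_nonneg_left key (mul_nonneg hf'.le hg'.le)
  calc |pairing2 f g z| = (‖f‖ * ‖g‖) * (‖f‖⁻¹ * ‖g‖⁻¹ * |pairing2 f g z|) := by
        field_simp
    _ ≤ (‖f‖ * ‖g‖) * injNorm2 z := this
    _ = ‖f‖ * ‖g‖ * injNorm2 z := by ring

/-- The slice map `a ⊗ b ↦ xs(b) • a`. -/
def slice2 (xs : B →L[ℝ] ℝ) : A ⊗[ℝ] B →ₗ[ℝ] A :=
  TensorProduct.lift (((LinearMap.lsmul ℝ A).comp xs.toLinearMap).flip)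

@[simp] lemma slice2_tmul (xs : B →L[ℝ] ℝ) (a : A) (b : B) :
    slice2 xs (a ⊗ₜ[ℝ] b) = xs b • a := rfl

lemma apply_slice2 (f : A →L[ℝ] ℝ) (xs : B →L[ℝ] ℝ) (z : A ⊗[ℝ] B) :
    f (slice2 xs z) = pairing2 f xs z := by
  induction z using TensorProduct.induction_on with
  | zero => simp
  | tmul a b => simp [mul_comm]
  | add u v hu hv => simp [map_add, hu, hv]

lemma norm_slice2_le (xs : B →L[ℝ] ℝ) (z : A ⊗[ℝ] B) :
    ‖slice2 xs z‖ ≤ ‖xs‖ * injNorm2 z := by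
  refine NormedSpace.norm_le_dual_bound ℝ _ (mul_nonneg (norm_nonneg _) (injNorm2_nonneg z))
    fun f => ?_
  rw [Real.norm_eq_abs, apply_slice2]
  calc |pairing2 f xs z| ≤ ‖f‖ * ‖xs‖ * injNorm2 z := abs_pairing2_le f xs z
    _ = ‖xs‖ * injNorm2 z * ‖f‖ := by ring

lemma projNorm2_set_nonempty (z : A ⊗[ℝ] B) :
    { r | ∃ (n : ℕ) (a : Fin n → A) (b : Fin n → B),
      z = ∑ j, a j ⊗ₜ[ℝ] b j ∧ r = ∑ j, ‖a j‖ * ‖b j‖ }.Nonempty := by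
  obtain ⟨n, a, b, hz⟩ := tensor_repr2 z
  exact ⟨_, n, a, b, hz, rfl⟩

lemma projNorm2_bddBelow (z : A ⊗[ℝ] B) :
    BddBelow { r | ∃ (n : ℕ) (a : Fin n → A) (b : Fin n → B),
      z = ∑ j, a j ⊗ₜ[ℝ] b j ∧ r = ∑ j, ‖a j‖ * ‖b j‖ } := by
  refine ⟨0, ?_⟩
  rintro r ⟨n, a, b, -, rfl⟩
  exact Finset.sum_nonneg fun j _ => mul_nonneg (norm_nonneg _) (norm_nonneg _)

lemma projNorm2_nonneg (z : A ⊗[ℝ] B) : 0 ≤ projNorm2 z :=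
  le_csInf (projNorm2_set_nonempty z) (by
    rintro r ⟨n, a, b, -, rfl⟩
    exact Finset.sum_nonneg fun j _ => mul_nonneg (norm_nonneg _) (norm_nonneg _))

lemma projNorm2_le_tmul (a : A) (b : B) : projNorm2 (a ⊗ₜ[ℝ] b) ≤ ‖a‖ * ‖b‖ :=
  csInf_le (projNorm2_bddBelow _) ⟨1, ![a], ![b], by simp, by simp⟩

lemma projNorm2_zero : projNorm2 (0 : A ⊗[ℝ] B) = 0 := by
  refine le_antisymm ?_ (projNorm2_nonneg 0)
  exact csInf_le (projNorm2_bddBelow _) ⟨0, ![], ![], by simp, by simp⟩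

lemma abs_pairing2_le_projNorm2 (f : A →L[ℝ] ℝ) (g : B →L[ℝ] ℝ)
    (hf : ‖f‖ ≤ 1) (hg : ‖g‖ ≤ 1) (z : A ⊗[ℝ] B) :
    |pairing2 f g z| ≤ projNorm2 z := by
  refine le_csInf (projNorm2_set_nonempty z) ?_
  rintro r ⟨n, a, b, rfl, rfl⟩
  rw [map_sum]
  refine (Finset.abs_sum_le_sum_abs _ _).trans (Finset.sum_le_sum fun j _ => ?_)
  rw [pairing2_tmul, abs_mul]
  calc |f (a j)| * |g (b j)| ≤ (‖f‖ * ‖a j‖) * (‖g‖ * ‖b j‖) := by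
        gcongr
        · exact f.le_opNorm _
        · exact g.le_opNorm _
    _ ≤ (1 * ‖a j‖) * (1 * ‖b j‖) := by gcongr
    _ = ‖a j‖ * ‖b j‖ := by ring

lemma projNorm2_tmul [FiniteDimensional ℝ A] [FiniteDimensional ℝ B] (a : A) (b : B) :
    projNorm2 (a ⊗ₜ[ℝ] b) = ‖a‖ * ‖b‖ := by
  refine le_antisymm (projNorm2_le_tmul a b) ?_
  rcases eq_or_ne a 0 with rfl | ha
  · simpa using projNorm2_nonneg ((0 : A) ⊗ₜ[ℝ] b)
  rcases eq_or_ne b 0 with rfl | hb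
  · simpa using projNorm2_nonneg (a ⊗ₜ[ℝ] (0 : B))
  obtain ⟨f, hf1, hfa⟩ := exists_dual_vector ℝ a (norm_ne_zero_iff.mpr ha)
  obtain ⟨g, hg1, hgb⟩ := exists_dual_vector ℝ b (norm_ne_zero_iff.mpr hb)
  have : ‖a‖ * ‖b‖ = |pairing2 f g (a ⊗ₜ[ℝ] b)| := by
    rw [pairing2_tmul, hfa, hgb]
    exact (abs_of_nonneg (mul_nonneg (norm_nonneg _) (norm_nonneg _))).symm
  rw [this]
  exact abs_pairing2_le_projNorm2 f g hf1.le hg1.le _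

lemma op_bound_of_unit {E F : Type*} [NormedAddCommGroup E] [NormedSpace ℝ E]
    [NormedAddCommGroup F] [NormedSpace ℝ F] (S : E →L[ℝ] F) (c K : ℝ)
    (hc : 0 ≤ c) (hK : 0 ≤ K) (h : ∀ v : E, ‖v‖ ≤ 1 → ‖S v‖ * K ≤ c) :
    ‖S‖ * K ≤ c := by
  rcases eq_or_lt_of_le hK with rfl | hK'
  · simpa using hc
  have hop : ‖S‖ ≤ c / K := by
    refine S.opNorm_le_bound (div_nonneg hc hK'.le) fun v => ?_
    rcases eq_or_ne v 0 with rfl | hv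
    · simp
    have hvn : 0 < ‖v‖ := norm_pos_iff.mpr hv
    have h1 := h (‖v‖⁻¹ • v) (by
      rw [norm_smul, norm_inv, norm_norm, inv_mul_cancel₀ hvn.ne'])
    rw [_root_.map_smul, norm_smul, norm_inv, norm_norm] at h1
    rw [div_mul_eq_mul_div, le_div_iff₀ hK']
    calc ‖S v‖ * K = ‖v‖ * (‖v‖⁻¹ * ‖S v‖ * K) := by field_simp
      _ ≤ ‖v‖ * c := mul_le_mul_of_nonneg_left h1 hvn.le
      _ = c * ‖v‖ := mul_comm _ _
  calc ‖S‖ * K ≤ (c / K) * K := mul_le_mul_of_nonneg_right hop hK'.le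
    _ = c := div_mul_cancel₀ c hK'.ne'

end Aux

theorem rank_one_tensorized_norm {X₁ X₂ Y₁ Y₂ : Type*}
    [NormedAddCommGroup X₁] [NormedSpace ℝ X₁] [NormedAddCommGroup X₂] [NormedSpace ℝ X₂]
    [NormedAddCommGroup Y₁] [NormedSpace ℝ Y₁] [NormedAddCommGroup Y₂] [NormedSpace ℝ Y₂]
    [FiniteDimensional ℝ X₁] [FiniteDimensional ℝ X₂]
    [FiniteDimensional ℝ Y₁] [FiniteDimensional ℝ Y₂]
    (T : X₁ →L[ℝ] Y₁) (y : Y₂) (xs : X₂ →L[ℝ] ℝ) :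
    sSup { r | ∃ z : X₁ ⊗[ℝ] X₂, injNorm2 z ≤ 1 ∧
        r = projNorm2 (TensorProduct.map T.toLinearMap (xs.smulRight y).toLinearMap z) } =
      ‖T‖ * ‖xs‖ * ‖y‖ := by
  set Φ := TensorProduct.map T.toLinearMap (xs.smulRight y).toLinearMap with hΦ
  have hmap : ∀ z : X₁ ⊗[ℝ] X₂, Φ z = (T (slice2 xs z)) ⊗ₜ[ℝ] y := by
    intro z
    induction z using TensorProduct.induction_on with
    | zero => simp [hΦ]
    | tmul a b =>
      simp only [hΦ, TensorProduct.map_tmul, slice2_tmul, ContinuousLinearMap.coe_coe,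
        ContinuousLinearMap.smulRight_apply, _root_.map_smul]
      rw [TensorProduct.smul_tmul]
    | add u v hu hv => rw [map_add, hu, hv, map_add, map_add, TensorProduct.add_tmul]
  have hzero_mem : (0 : ℝ) ∈ { r | ∃ z : X₁ ⊗[ℝ] X₂, injNorm2 z ≤ 1 ∧
      r = projNorm2 (Φ z) } := by
    refine ⟨0, ?_, ?_⟩
    · rw [injNorm2_eq]
      refine csSup_le ⟨0, 0, 0, by simp, by simp, by simp [pairing2_zero_left]⟩ ?_
      rintro r ⟨f, g, -, -, rfl⟩
      simp
    · rw [map_zero, projNorm2_zero]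
  have hub : ∀ r ∈ { r | ∃ z : X₁ ⊗[ℝ] X₂, injNorm2 z ≤ 1 ∧ r = projNorm2 (Φ z) },
      r ≤ ‖T‖ * ‖xs‖ * ‖y‖ := by
    rintro r ⟨z, hz, rfl⟩
    rw [hmap]
    refine (projNorm2_le_tmul _ _).trans ?_
    have h1 : ‖T (slice2 xs z)‖ ≤ ‖T‖ * ‖xs‖ := by
      calc ‖T (slice2 xs z)‖ ≤ ‖T‖ * ‖slice2 xs z‖ := T.le_opNorm _
        _ ≤ ‖T‖ * (‖xs‖ * injNorm2 z) := by gcongr; exact norm_slice2_le xs z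
        _ ≤ ‖T‖ * (‖xs‖ * 1) := by gcongr
        _ = ‖T‖ * ‖xs‖ := by ring
    calc ‖T (slice2 xs z)‖ * ‖y‖ ≤ (‖T‖ * ‖xs‖) * ‖y‖ := by gcongr
      _ = ‖T‖ * ‖xs‖ * ‖y‖ := by ring
  refine le_antisymm (csSup_le ⟨0, hzero_mem⟩ hub) ?_
  rw [le_csSup_iff ⟨‖T‖ * ‖xs‖ * ‖y‖, fun r hr => hub r hr⟩ ⟨0, hzero_mem⟩]
  intro c hc
  have hc0 : 0 ≤ c := hc hzero_mem
  have hmem : ∀ (a : X₁) (b : X₂), ‖a‖ ≤ 1 → ‖b‖ ≤ 1 →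
      ‖T a‖ * (|xs b| * ‖y‖) ≤ c := by
    intro a b ha hb
    have hinj : injNorm2 (a ⊗ₜ[ℝ] b) ≤ 1 := by
      rw [injNorm2_eq]
      refine csSup_le ⟨0, 0, 0, by simp, by simp, by simp [pairing2_zero_left]⟩ ?_
      rintro r ⟨f, g, hf, hg, rfl⟩
      rw [pairing2_tmul, abs_mul]
      calc |f a| * |g b| ≤ (‖f‖ * ‖a‖) * (‖g‖ * ‖b‖) := by
            gcongr
            · exact f.le_opNorm a
            · exact g.le_opNorm b
        _ ≤ (1 * 1) * (1 * 1) := by gcongr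
        _ = 1 := by norm_num
    have hv : projNorm2 (Φ (a ⊗ₜ[ℝ] b)) ≤ c := hc ⟨a ⊗ₜ[ℝ] b, hinj, rfl⟩
    have hΦab : Φ (a ⊗ₜ[ℝ] b) = (T a) ⊗ₜ[ℝ] (xs b • y) := by
      simp [hΦ, TensorProduct.map_tmul]
    rw [hΦab, projNorm2_tmul, norm_smul, Real.norm_eq_abs] at hv
    linarith [hv]
  have step1 : ∀ b : X₂, ‖b‖ ≤ 1 → ‖T‖ * (|xs b| * ‖y‖) ≤ c := by
    intro b hb
    exact op_bound_of_unit T c (|xs b| * ‖y‖) hc0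
      (mul_nonneg (abs_nonneg _) (norm_nonneg _)) (fun v hv => hmem v b hv hb)
  have step2 : ‖xs‖ * (‖T‖ * ‖y‖) ≤ c := by
    refine op_bound_of_unit xs c (‖T‖ * ‖y‖) hc0
      (mul_nonneg (norm_nonneg _) (norm_nonneg _)) (fun b hb => ?_)
    have := step1 b hb
    rw [Real.norm_eq_abs]
    linarith [this]
  linarith [step2]

end
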